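/- Let p ≥ 2 be an integer and let k = 3m + 1 with m ≥ 1. Then 𝓥_{k,m}(u) = 𝓚_{k,m}(u) identically, and 𝓦_{k,m}(u) ≡ −𝓦_{k,m−1}(u) + 𝓥_{k,m−1}(u) modulo densities in Ω_k + Θ_k. -/

import Mathlib

open MeasureTheory
open scoped Real BigOperators ENNReal

noncomputable section

/-- `n`-th spatial derivative. -/
def pD (n : ℕ) (f : ℝ → ℂ) : ℝ → ℂ := iteratedDeriv n f

/-- Complex conjugate of the `n`-th spatial derivative. -/
def cD (n : ℕ) (f : ℝ → ℂ) (x : ℝ) : ℂ := (starRingEnd ℂ) (iteratedDeriv n f x)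

/-- Integral over one period of the torus `𝕋 = ℝ/2πℤ`. -/
def tInt (f : ℝ → ℂ) : ℂ := ∫ x in (0:ℝ)..(2 * Real.pi), f x

/-- Squared `L²(𝕋)` norm. -/
def L2sq (f : ℝ → ℂ) : ℝ := ∫ x in (0:ℝ)..(2 * Real.pi), ‖f x‖ ^ 2

/-- Squared `Hᵏ(𝕋)` norm: `‖u‖² = ‖u‖²_{L²} + ‖∂ₓᵏu‖²_{L²}`. -/
def HkSq (k : ℕ) (f : ℝ → ℂ) : ℝ := L2sq f + L2sq (pD k f)

/-- `Hᵏ(𝕋)` norm. -/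
def HkNorm (k : ℕ) (f : ℝ → ℂ) : ℝ := Real.sqrt (HkSq k f)

/-- A classical (smooth and `2π`-periodic in space, differentiable in time) solution of the
defocusing NLS `i ∂ₜ u + ∂ₓ² u - u |u|^{2p} = 0` for times in the set `I`. -/
structure IsNLS (p : ℕ) (I : Set ℝ) (u : ℝ → ℝ → ℂ) : Prop where
  smooth : ∀ t ∈ I, ContDiff ℝ (⊤ : ℕ∞) (u t)
  periodic : ∀ t ∈ I, Function.Periodic (u t) (2 * Real.pi)
  tdiff : ∀ (x : ℝ), ∀ t ∈ I, DifferentiableAt ℝ (fun s => u s x) t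
  eqn : ∀ t ∈ I, ∀ x : ℝ,
    Complex.I * deriv (fun s => u s x) t + pD 2 (u t) x
      = u t x * ((‖u t x‖ : ℂ)) ^ (2 * p)

/-- `𝓘_{k,h}(u) = Im ∫ (∂ₓ^{k-h}u)² ∂ₓ^{2h}u · u^{p-2} ū^{p+1}`. -/
def IdenR (p k h : ℕ) (f : ℝ → ℂ) : ℝ :=
  (tInt fun x => (pD (k - h) f x) ^ 2 * pD (2 * h) f x * f x ^ (p - 2) * (cD 0 f x) ^ (p + 1)).im

/-- `𝓚_{k,h}(u) = Im ∫ (∂ₓ^{k-h}u)² ∂ₓ^{2h}ū · u^{p-1} ū^{p}`. -/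
def KdenR (p k h : ℕ) (f : ℝ → ℂ) : ℝ :=
  (tInt fun x => (pD (k - h) f x) ^ 2 * cD (2 * h) f x * f x ^ (p - 1) * (cD 0 f x) ^ p).im

/-- `𝓥_{k,h}(u) = Im ∫ ∂ₓ^{k-h}u ∂ₓ^{k-h-1}ū ∂ₓ^{2h+1}u · u^{p-1} ū^{p}`. -/
def VdenR (p k h : ℕ) (f : ℝ → ℂ) : ℝ :=
  (tInt fun x => pD (k - h) f x * cD (k - h - 1) f x * pD (2 * h + 1) f x
      * f x ^ (p - 1) * (cD 0 f x) ^ p).im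

/-- `𝓦_{k,h}(u) = Im ∫ ∂ₓ^{k-h}u ∂ₓ^{k-h-1}ū ∂ₓ^{2h+1}ū · u^{p} ū^{p-1}`. -/
def WdenR (p k h : ℕ) (f : ℝ → ℂ) : ℝ :=
  (tInt fun x => pD (k - h) f x * cD (k - h - 1) f x * cD (2 * h + 1) f x
      * f x ^ p * (cD 0 f x) ^ (p - 1)).im

/-- The entries of the multi-index are nonincreasing. -/
def antitoneIdx {n : ℕ} (i : Fin n → ℕ) : Prop := ∀ l l' : Fin n, l ≤ l' → i l' ≤ i l

/-- The functional `𝓙_{(i,j)}(u) = ∫ ∂ₓ^{i₁}u ⋯ ∂ₓ^{iₙ}u ∂ₓ^{j₁}ū ⋯ ∂ₓ^{jₙ}ū`. -/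
def Jfun {n : ℕ} (ij : (Fin n → ℕ) × (Fin n → ℕ)) (f : ℝ → ℂ) : ℂ :=
  tInt fun x => (∏ l, pD (ij.1 l) f x) * ∏ l, cD (ij.2 l) f x

/-- The index set `𝓒ᵏ`. -/
def Cset (p k : ℕ) : Set ((Fin (2 * p + 1) → ℕ) × (Fin (2 * p + 1) → ℕ)) :=
  {ij | antitoneIdx ij.1 ∧ antitoneIdx ij.2 ∧ (∑ l, (ij.1 l + ij.2 l)) = 2 * k - 2 ∧
    ij.1 0 ≤ k - 1 ∧ ij.2 0 ≤ k - 1}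

/-- The index set `𝓓ᵏ`. -/
def Dset (p k : ℕ) : Set ((Fin (p + 1) → ℕ) × (Fin (p + 1) → ℕ)) :=
  {ij | antitoneIdx ij.1 ∧ antitoneIdx ij.2 ∧ (∑ l, (ij.1 l + ij.2 l)) = 2 * k ∧
    4 ≤ (∑ l, min (ij.1 l) 1) + ∑ l, min (ij.2 l) 1}

/-- The index set `𝓖ᵏ`. -/
def Gset (p k : ℕ) : Set ((Fin (p + 1) → ℕ) × (Fin (p + 1) → ℕ)) :=
  {ij | antitoneIdx ij.1 ∧ antitoneIdx ij.2 ∧ (∑ l, (ij.1 l + ij.2 l)) = 2 * k - 2 ∧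
    ij.1 0 ≤ k - 1 ∧ ij.2 0 ≤ k - 1}

/-- Smooth `2π`-periodic functions on the line (i.e. smooth functions on the torus). -/
abbrev SPfun := {f : ℝ → ℂ // ContDiff ℝ (⊤ : ℕ∞) f ∧ Function.Periodic f (2 * Real.pi)}

/-- The span `Ω_k + Θ_k` of the functionals `𝓙_{(i,j)}` for `(i,j) ∈ 𝓓ᵏ ∪ 𝓒ᵏ`. -/
def spanJ (p k : ℕ) : Submodule ℂ (SPfun → ℂ) :=
  Submodule.span ℂ
    (({F | ∃ ij ∈ Dset p k, F = fun f => Jfun ij f.1} ∪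
      {F | ∃ ij ∈ Cset p k, F = fun f => Jfun ij f.1} : Set (SPfun → ℂ)))

/-- Equivalence of densities modulo `Ω_k + Θ_k`. -/
def EquivMod (p k : ℕ) (F G : SPfun → ℂ) : Prop := F - G ∈ spanJ p k


namespace NLSaux

variable {f : ℝ → ℂ}

lemma pD_zero (f : ℝ → ℂ) : pD 0 f = f := iteratedDeriv_zero

lemma contDiff_pD (hf : ContDiff ℝ (⊤ : ℕ∞) f) (n : ℕ) : ContDiff ℝ (⊤ : ℕ∞) (pD n f) := by
  rw [pD, iteratedDeriv_eq_iterate]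
  exact (hf.of_le (by simp)).iterate_deriv n

lemma cont_pD (hf : ContDiff ℝ (⊤ : ℕ∞) f) (n : ℕ) : Continuous (pD n f) :=
  (contDiff_pD hf n).continuous

lemma cont_cD (hf : ContDiff ℝ (⊤ : ℕ∞) f) (n : ℕ) : Continuous (cD n f) :=
  Complex.continuous_conj.comp (cont_pD hf n)

lemma hasDerivAt_pD (hf : ContDiff ℝ (⊤ : ℕ∞) f) (n : ℕ) (x : ℝ) :
    HasDerivAt (pD n f) (pD (n + 1) f x) x := by
  have hd : DifferentiableAt ℝ (pD n f) x :=
    ((contDiff_infty_iff_deriv.mp (contDiff_pD hf n)).1).differentiableAt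
  have : pD (n+1) f x = deriv (pD n f) x := by
    simp [pD, iteratedDeriv_succ]
  rw [this]
  exact hd.hasDerivAt

lemma hasDerivAt_cD (hf : ContDiff ℝ (⊤ : ℕ∞) f) (n : ℕ) (x : ℝ) :
    HasDerivAt (cD n f) (cD (n + 1) f x) x := by
  have := ((Complex.conjCLE.toContinuousLinearMap).hasFDerivAt).comp_hasDerivAt x
    (hasDerivAt_pD hf n x)
  exact this

lemma periodic_pD (h : Function.Periodic f (2 * Real.pi)) (n : ℕ) :
    Function.Periodic (pD n f) (2 * Real.pi) := by
  induction n with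
  | zero => simpa [pD] using h
  | succ n ih =>
    intro x
    simp only [pD, iteratedDeriv_succ]
    have : (fun y => iteratedDeriv n f (y + 2 * Real.pi)) = iteratedDeriv n f := funext ih
    rw [← deriv_comp_add_const, this]

lemma periodic_cD (h : Function.Periodic f (2 * Real.pi)) (n : ℕ) :
    Function.Periodic (cD n f) (2 * Real.pi) := fun x => by
  simp only [cD]; exact congrArg _ (periodic_pD h n x)

lemma tInt_conj (g : ℝ → ℂ) :
    tInt (fun x => (starRingEnd ℂ) (g x)) = (starRingEnd ℂ) (tInt g) := by
  unfold tInt intervalIntegral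
  simp only [map_sub, ← integral_conj]

lemma ofReal_im (z : ℂ) : (z.im : ℂ) = (z - (starRingEnd ℂ) z) / (2 * Complex.I) := by
  rw [Complex.sub_conj]
  have h2 : (2 : ℂ) * Complex.I ≠ 0 := by simp [Complex.I_ne_zero]
  field_simp
  ring
  norm_cast

lemma tInt_add {g₁ g₂ : ℝ → ℂ} (h₁ : Continuous g₁) (h₂ : Continuous g₂) :
    tInt (fun x => g₁ x + g₂ x) = tInt g₁ + tInt g₂ :=
  intervalIntegral.integral_add (h₁.intervalIntegrable _ _) (h₂.intervalIntegrable _ _)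

lemma tInt_add5 {g₁ g₂ g₃ g₄ g₅ : ℝ → ℂ} (h₁ : Continuous g₁) (h₂ : Continuous g₂)
    (h₃ : Continuous g₃) (h₄ : Continuous g₄) (h₅ : Continuous g₅) :
    tInt (fun x => g₁ x + g₂ x + g₃ x + g₄ x + g₅ x)
      = tInt g₁ + tInt g₂ + tInt g₃ + tInt g₄ + tInt g₅ := by
  have e4 : tInt (fun x => g₁ x + g₂ x + g₃ x + g₄ x)
      = tInt (fun x => g₁ x + g₂ x + g₃ x) + tInt g₄ :=
    tInt_add (by fun_prop) h₄
  have e3 : tInt (fun x => g₁ x + g₂ x + g₃ x)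
      = tInt (fun x => g₁ x + g₂ x) + tInt g₃ :=
    tInt_add (by fun_prop) h₃
  have e2 : tInt (fun x => g₁ x + g₂ x) = tInt g₁ + tInt g₂ := tInt_add h₁ h₂
  have e5 : tInt (fun x => g₁ x + g₂ x + g₃ x + g₄ x + g₅ x)
      = tInt (fun x => g₁ x + g₂ x + g₃ x + g₄ x) + tInt g₅ :=
    tInt_add (by fun_prop) h₅
  rw [e5, e4, e3, e2]

lemma tInt_const_mul (c : ℂ) (g : ℝ → ℂ) :
    tInt (fun x => c * g x) = c * tInt g :=
  intervalIntegral.integral_const_mul c g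

/-- the multi-index `(a, b, c, 0, 0, ..., 0)`. -/
def idx3 (a b c : ℕ) {n : ℕ} : Fin n → ℕ := fun l =>
  if l.val = 0 then a else if l.val = 1 then b else if l.val = 2 then c else 0

lemma antitone_idx3 {n : ℕ} (a b c : ℕ) (hcb : c ≤ b) (hba : b ≤ a) :
    antitoneIdx (idx3 a b c (n := n)) := by
  intro l l' h
  rw [Fin.le_def] at h
  unfold idx3
  split_ifs <;> omega

lemma sum_fin_eq {n : ℕ} (hn : 3 ≤ n) (F : ℕ → ℕ) (hF : ∀ i, 3 ≤ i → F i = 0) :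
    ∑ l : Fin n, F l.val = F 0 + F 1 + F 2 := by
  rw [Fin.sum_univ_eq_sum_range]
  rw [← Finset.sum_subset (Finset.range_subset_range.mpr hn)
    (fun i _ hi => hF i (by simpa using hi))]
  simp [Finset.sum_range_succ]

lemma sum_idx3 {n : ℕ} (hn : 3 ≤ n) (a b c : ℕ) :
    ∑ l : Fin n, idx3 a b c l = a + b + c := by
  have := sum_fin_eq hn
    (fun i => if i = 0 then a else if i = 1 then b else if i = 2 then c else 0)
    (fun i hi => by split_ifs <;> omega)
  simpa [idx3] using this

lemma sum_min_idx3 {n : ℕ} (hn : 3 ≤ n) (a b c : ℕ) :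
    ∑ l : Fin n, min (idx3 a b c l) 1 = min a 1 + min b 1 + min c 1 := by
  have := sum_fin_eq hn
    (fun i => min (if i = 0 then a else if i = 1 then b else if i = 2 then c else 0) 1)
    (fun i hi => by split_ifs <;> omega)
  simpa [idx3] using this

lemma prod_fin_eq {n : ℕ} (hn : 3 ≤ n) (G : ℕ → ℂ) (c : ℂ) (hG : ∀ i, 3 ≤ i → G i = c) :
    ∏ l : Fin n, G l.val = G 0 * G 1 * G 2 * c ^ (n - 3) := by
  rw [Fin.prod_univ_eq_prod_range]
  rw [Finset.range_eq_Ico, ← Finset.prod_Ico_consecutive _ (Nat.zero_le 3) hn]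
  have h1 : ∏ i ∈ Finset.Ico 3 n, G i = c ^ (n - 3) := by
    rw [Finset.prod_congr rfl (fun i hi => hG i (Finset.mem_Ico.mp hi).1),
      Finset.prod_const, Nat.card_Ico]
  rw [h1, ← Finset.range_eq_Ico]
  rw [show (3:ℕ) = 2 + 1 from rfl, Finset.prod_range_succ, Finset.prod_range_succ,
    Finset.prod_range_one]

lemma prod_idx3 {n : ℕ} (hn : 3 ≤ n) (a b c : ℕ) (g : ℕ → ℂ) :
    ∏ l : Fin n, g (idx3 a b c l) = g a * g b * g c * (g 0) ^ (n - 3) := by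
  have := prod_fin_eq hn
    (fun i => g (if i = 0 then a else if i = 1 then b else if i = 2 then c else 0))
    (g 0) (fun i hi => by split_ifs <;> first | rfl | omega)
  simpa [idx3] using this

/-- The key integration-by-parts identity: the integral over a period of the derivative of
`∂^{2n+3}u ∂^{2n+3}ū ∂^{2n+1}ū u^{q+2} ū^{q+1}` vanishes. -/
lemma key (q n : ℕ) (f : ℝ → ℂ) (hf : ContDiff ℝ (⊤ : ℕ∞) f)
    (hper : Function.Periodic f (2 * Real.pi)) :
    tInt (fun x => pD (2*n+4) f x * cD (2*n+3) f x * cD (2*n+1) f x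
        * f x ^ (q+2) * cD 0 f x ^ (q+1))
    + tInt (fun x => pD (2*n+3) f x * cD (2*n+4) f x * cD (2*n+1) f x
        * f x ^ (q+2) * cD 0 f x ^ (q+1))
    + tInt (fun x => pD (2*n+3) f x * cD (2*n+3) f x * cD (2*n+2) f x
        * f x ^ (q+2) * cD 0 f x ^ (q+1))
    + ((q:ℂ)+2) * tInt (fun x => pD (2*n+3) f x * cD (2*n+3) f x * cD (2*n+1) f x
        * pD 1 f x * f x ^ (q+1) * cD 0 f x ^ (q+1))
    + ((q:ℂ)+1) * tInt (fun x => pD (2*n+3) f x * cD (2*n+3) f x * cD (2*n+1) f x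
        * cD 1 f x * f x ^ (q+2) * cD 0 f x ^ q) = 0 := by
  have c1 := cont_pD hf (2*n+4)
  have c2 := cont_pD hf (2*n+3)
  have c3 := cont_cD hf (2*n+4)
  have c4 := cont_cD hf (2*n+3)
  have c5 := cont_cD hf (2*n+2)
  have c6 := cont_cD hf (2*n+1)
  have c7 : Continuous f := hf.continuous
  have c8 := cont_pD hf 1
  have c9 := cont_cD hf 1
  have c0 := cont_cD hf 0
  -- the pointwise derivative
  set D : ℝ → ℂ := fun x =>
    pD (2*n+4) f x * cD (2*n+3) f x * cD (2*n+1) f x * f x ^ (q+2) * cD 0 f x ^ (q+1)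
    + pD (2*n+3) f x * cD (2*n+4) f x * cD (2*n+1) f x * f x ^ (q+2) * cD 0 f x ^ (q+1)
    + pD (2*n+3) f x * cD (2*n+3) f x * cD (2*n+2) f x * f x ^ (q+2) * cD 0 f x ^ (q+1)
    + ((q:ℂ)+2) * (pD (2*n+3) f x * cD (2*n+3) f x * cD (2*n+1) f x
        * pD 1 f x * f x ^ (q+1) * cD 0 f x ^ (q+1))
    + ((q:ℂ)+1) * (pD (2*n+3) f x * cD (2*n+3) f x * cD (2*n+1) f x
        * cD 1 f x * f x ^ (q+2) * cD 0 f x ^ q) with hD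
  set h : ℝ → ℂ := fun x =>
    pD (2*n+3) f x * cD (2*n+3) f x * cD (2*n+1) f x * f x ^ (q+2) * cD 0 f x ^ (q+1) with hh
  have hd : ∀ x ∈ Set.uIcc (0:ℝ) (2 * Real.pi), HasDerivAt h (D x) x := by
    intro x _
    have h1 := hasDerivAt_pD hf (2*n+3) x
    have h2 := hasDerivAt_cD hf (2*n+3) x
    have h3 := hasDerivAt_cD hf (2*n+1) x
    have h3' : HasDerivAt (cD (2*n+1) f) (cD (2*n+2) f x) x := by
      have e : 2*n+1+1 = 2*n+2 := by omega
      rwa [e] at h3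
    have hf' : HasDerivAt f (pD 1 f x) x := by
      have := hasDerivAt_pD hf 0 x
      rwa [pD_zero] at this
    have h4 : HasDerivAt (fun y => f y ^ (q+2)) (((q:ℂ)+2) * f x ^ (q+1) * pD 1 f x) x := by
      have := (hasDerivAt_pow (q+2) (f x)).comp x hf'
      simp only [Function.comp_def, Nat.add_sub_cancel] at this
      refine this.congr_deriv ?_
      rw [show q+2-1 = q+1 from rfl]
      push_cast
      ring
    have h5 : HasDerivAt (fun y => cD 0 f y ^ (q+1))
        (((q:ℂ)+1) * cD 0 f x ^ q * cD 1 f x) x := by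
      have := (hasDerivAt_pow (q+1) (cD 0 f x)).comp x (hasDerivAt_cD hf 0 x)
      simp only [Function.comp, Nat.add_sub_cancel] at this
      refine this.congr_deriv ?_
      rw [zero_add]
      push_cast
      ring
    have e2 : 2*n+3+1 = 2*n+4 := by omega
    rw [e2] at h1 h2
    have H := ((((h1.mul h2).mul h3').mul h4).mul h5)
    exact H.congr_deriv (by
      simp only [hD, Nat.add_sub_cancel, Pi.mul_apply]
      push_cast
      ring)
  have hDc : Continuous D := by
    rw [hD]
    fun_prop
  have hFTC : tInt D = h (2 * Real.pi) - h 0 := by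
    unfold tInt
    exact intervalIntegral.integral_eq_sub_of_hasDerivAt hd (hDc.intervalIntegrable _ _)
  have hper0 : h (2 * Real.pi) = h 0 := by
    simp only [hh]
    rw [show (2 * Real.pi) = 0 + 2 * Real.pi by ring]
    rw [periodic_pD hper (2*n+3) 0, periodic_cD hper (2*n+3) 0,
      periodic_cD hper (2*n+1) 0, hper 0, periodic_cD hper 0 0]
  have hzero : tInt D = 0 := by rw [hFTC, hper0, sub_self]
  have hsplit : tInt D
      = tInt (fun x => pD (2*n+4) f x * cD (2*n+3) f x * cD (2*n+1) f x
          * f x ^ (q+2) * cD 0 f x ^ (q+1))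
      + tInt (fun x => pD (2*n+3) f x * cD (2*n+4) f x * cD (2*n+1) f x
          * f x ^ (q+2) * cD 0 f x ^ (q+1))
      + tInt (fun x => pD (2*n+3) f x * cD (2*n+3) f x * cD (2*n+2) f x
          * f x ^ (q+2) * cD 0 f x ^ (q+1))
      + tInt (fun x => ((q:ℂ)+2) * (pD (2*n+3) f x * cD (2*n+3) f x * cD (2*n+1) f x
          * pD 1 f x * f x ^ (q+1) * cD 0 f x ^ (q+1)))
      + tInt (fun x => ((q:ℂ)+1) * (pD (2*n+3) f x * cD (2*n+3) f x * cD (2*n+1) f x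
          * cD 1 f x * f x ^ (q+2) * cD 0 f x ^ q)) :=
    tInt_add5 (by fun_prop) (by fun_prop) (by fun_prop) (by fun_prop) (by fun_prop)
  rw [tInt_const_mul, tInt_const_mul] at hsplit
  rw [← hsplit]
  exact hzero

end NLSaux

/-- Identities (3.11) and (3.12): for `k = 3m + 1` one has `𝓥_{k,m} = 𝓚_{k,m}` and
`𝓦_{k,m} ≡ 𝓥_{k,m-1} - 𝓦_{k,m-1}` modulo `Ω_k + Θ_k`. -/
theorem VK_and_W_identities
    (p m k : ℕ) (hp : 2 ≤ p) (hm : 1 ≤ m) (hk : k = 3 * m + 1) :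
    (∀ f : ℝ → ℂ, ContDiff ℝ (⊤ : ℕ∞) f → Function.Periodic f (2 * Real.pi) →
      VdenR p k m f = KdenR p k m f) ∧
    EquivMod p k (fun f => Complex.ofReal (WdenR p k m f.1))
      (fun f => Complex.ofReal (VdenR p k (m - 1) f.1 - WdenR p k (m - 1) f.1)) := by
  subst hk
  obtain ⟨n, rfl⟩ : ∃ n, m = n + 1 := ⟨m - 1, by omega⟩
  obtain ⟨q, rfl⟩ : ∃ q, p = q + 2 := ⟨p - 2, by omega⟩
  open NLSaux in
  constructor
  · -- (3.11): 𝓥_{k,m} = 𝓚_{k,m}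
    intro f hf hper
    have e1 : 3 * (n+1) + 1 - (n+1) = 2*n+3 := by omega
    have e2 : 3 * (n+1) + 1 - (n+1) - 1 = 2*n+2 := by omega
    have e3 : 2 * (n+1) = 2*n+2 := by omega
    have e4 : 2 * (n+1) + 1 = 2*n+3 := by omega
    have e6 : 2*n+2+1 = 2*n+3 := by omega
    have e8 : 2*n+3-1 = 2*n+2 := by omega
    simp only [VdenR, KdenR, e1, e2, e8, e3, e4, e6]
    congr 1
    unfold tInt
    congr 1
    funext x
    ring
  · -- (3.12)
    unfold EquivMod
    have hq3 : 3 ≤ q + 2 + 1 := by omega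
    have hmem : ∀ ij ∈ Dset (q+2) (3*(n+1)+1),
        (fun f : SPfun => Jfun ij f.1) ∈ spanJ (q+2) (3*(n+1)+1) := fun ij hij =>
      Submodule.subset_span (Or.inl ⟨ij, hij, rfl⟩)
    have memA : ((idx3 (2*n+3) 1 0 : Fin (q+2+1) → ℕ),
        (idx3 (2*n+3) (2*n+1) 0 : Fin (q+2+1) → ℕ)) ∈ Dset (q+2) (3*(n+1)+1) := by
      refine ⟨antitone_idx3 _ _ _ (by omega) (by omega),
        antitone_idx3 _ _ _ (by omega) (by omega), ?_, ?_⟩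
      · rw [Finset.sum_add_distrib, sum_idx3 hq3, sum_idx3 hq3]; omega
      · rw [sum_min_idx3 hq3, sum_min_idx3 hq3]; omega
    have memA' : ((idx3 (2*n+3) (2*n+1) 0 : Fin (q+2+1) → ℕ),
        (idx3 (2*n+3) 1 0 : Fin (q+2+1) → ℕ)) ∈ Dset (q+2) (3*(n+1)+1) := by
      refine ⟨antitone_idx3 _ _ _ (by omega) (by omega),
        antitone_idx3 _ _ _ (by omega) (by omega), ?_, ?_⟩
      · rw [Finset.sum_add_distrib, sum_idx3 hq3, sum_idx3 hq3]; omega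
      · rw [sum_min_idx3 hq3, sum_min_idx3 hq3]; omega
    have memB : ((idx3 (2*n+3) 0 0 : Fin (q+2+1) → ℕ),
        (idx3 (2*n+3) (2*n+1) 1 : Fin (q+2+1) → ℕ)) ∈ Dset (q+2) (3*(n+1)+1) := by
      refine ⟨antitone_idx3 _ _ _ (by omega) (by omega),
        antitone_idx3 _ _ _ (by omega) (by omega), ?_, ?_⟩
      · rw [Finset.sum_add_distrib, sum_idx3 hq3, sum_idx3 hq3]; omega
      · rw [sum_min_idx3 hq3, sum_min_idx3 hq3]; omega
    have memB' : ((idx3 (2*n+3) (2*n+1) 1 : Fin (q+2+1) → ℕ),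
        (idx3 (2*n+3) 0 0 : Fin (q+2+1) → ℕ)) ∈ Dset (q+2) (3*(n+1)+1) := by
      refine ⟨antitone_idx3 _ _ _ (by omega) (by omega),
        antitone_idx3 _ _ _ (by omega) (by omega), ?_, ?_⟩
      · rw [Finset.sum_add_distrib, sum_idx3 hq3, sum_idx3 hq3]; omega
      · rw [sum_min_idx3 hq3, sum_min_idx3 hq3]; omega
    have key4 : (fun f : SPfun => ((WdenR (q+2) (3*(n+1)+1) (n+1) f.1 : ℝ) : ℂ))
        - (fun f : SPfun => ((VdenR (q+2) (3*(n+1)+1) (n+1-1) f.1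
            - WdenR (q+2) (3*(n+1)+1) (n+1-1) f.1 : ℝ) : ℂ))
      = (-(((q:ℂ)+2)/(2*Complex.I))) • (fun f : SPfun =>
          Jfun ((idx3 (2*n+3) 1 0 : Fin (q+2+1) → ℕ), (idx3 (2*n+3) (2*n+1) 0 : Fin (q+2+1) → ℕ)) f.1)
      + (-(((q:ℂ)+1)/(2*Complex.I))) • (fun f : SPfun =>
          Jfun ((idx3 (2*n+3) 0 0 : Fin (q+2+1) → ℕ), (idx3 (2*n+3) (2*n+1) 1 : Fin (q+2+1) → ℕ)) f.1)
      + ((((q:ℂ)+2)/(2*Complex.I))) • (fun f : SPfun =>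
          Jfun ((idx3 (2*n+3) (2*n+1) 0 : Fin (q+2+1) → ℕ), (idx3 (2*n+3) 1 0 : Fin (q+2+1) → ℕ)) f.1)
      + ((((q:ℂ)+1)/(2*Complex.I))) • (fun f : SPfun =>
          Jfun ((idx3 (2*n+3) (2*n+1) 1 : Fin (q+2+1) → ℕ), (idx3 (2*n+3) 0 0 : Fin (q+2+1) → ℕ)) f.1) := by
      funext f
      have hg : ContDiff ℝ (⊤ : ℕ∞) f.1 := f.2.1
      have hper : Function.Periodic f.1 (2 * Real.pi) := f.2.2
      set g := f.1 with hgdef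
      simp only [Pi.sub_apply, Pi.add_apply, Pi.smul_apply, smul_eq_mul, Nat.add_sub_cancel]
      -- identify the three densities with clean integrals
      have e1 : 3 * (n+1) + 1 - (n+1) = 2*n+3 := by omega
      have e2 : 3 * (n+1) + 1 - (n+1) - 1 = 2*n+2 := by omega
      have e3 : 2 * (n+1) + 1 = 2*n+3 := by omega
      have e4 : 3 * (n+1) + 1 - n = 2*n+4 := by omega
      have e5 : 3 * (n+1) + 1 - n - 1 = 2*n+3 := by omega
      have e7 : q + 2 - 1 = q+1 := by omega
      have e8 : 2*n+3-1 = 2*n+2 := by omega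
      have e9 : 2*n+4-1 = 2*n+3 := by omega
      have hW1 : WdenR (q+2) (3*(n+1)+1) (n+1) g
          = (tInt (fun x => pD (2*n+3) g x * cD (2*n+3) g x * cD (2*n+2) g x
              * g x ^ (q+2) * cD 0 g x ^ (q+1))).im := by
        unfold WdenR
        simp only [e1, e2, e8, e7]
        try congr 1
        all_goals refine congrArg tInt ?_
        all_goals funext x
        all_goals ring
      have hW2 : WdenR (q+2) (3*(n+1)+1) n g
          = (tInt (fun x => pD (2*n+4) g x * cD (2*n+3) g x * cD (2*n+1) g x
              * g x ^ (q+2) * cD 0 g x ^ (q+1))).im := by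
        unfold WdenR
        simp only [e4, e5, e9, e7]
        try congr 1
        all_goals refine congrArg tInt ?_
        all_goals funext x
        all_goals ring
      have hV : VdenR (q+2) (3*(n+1)+1) n g
          = (tInt (fun x => pD (2*n+4) g x * cD (2*n+3) g x * pD (2*n+1) g x
              * g x ^ (q+1) * cD 0 g x ^ (q+2))).im := by
        unfold VdenR
        simp only [e4, e5, e9, e7]
        try congr 1
        all_goals refine congrArg tInt ?_
        all_goals funext x
        all_goals ring
      have hBconj : tInt (fun x => pD (2*n+3) g x * cD (2*n+4) g x * cD (2*n+1) g x
              * g x ^ (q+2) * cD 0 g x ^ (q+1))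
          = (starRingEnd ℂ) (tInt (fun x => pD (2*n+4) g x * cD (2*n+3) g x * pD (2*n+1) g x
              * g x ^ (q+1) * cD 0 g x ^ (q+2))) := by
        rw [← tInt_conj]
        congr 1
        funext x
        simp only [map_mul, map_pow, cD, pD, Complex.conj_conj, iteratedDeriv_zero]
        ring
      have hJA : tInt (fun x => pD (2*n+3) g x * cD (2*n+3) g x * cD (2*n+1) g x
              * pD 1 g x * g x ^ (q+1) * cD 0 g x ^ (q+1))
          = Jfun ((idx3 (2*n+3) 1 0 : Fin (q+2+1) → ℕ),
              (idx3 (2*n+3) (2*n+1) 0 : Fin (q+2+1) → ℕ)) g := by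
        unfold Jfun
        congr 1
        funext x
        rw [prod_idx3 hq3 _ _ _ (fun j => pD j g x), prod_idx3 hq3 _ _ _ (fun j => cD j g x)]
        simp only [pD_zero, show q+2+1-3 = q from by omega]
        ring
      have hJB : tInt (fun x => pD (2*n+3) g x * cD (2*n+3) g x * cD (2*n+1) g x
              * cD 1 g x * g x ^ (q+2) * cD 0 g x ^ q)
          = Jfun ((idx3 (2*n+3) 0 0 : Fin (q+2+1) → ℕ),
              (idx3 (2*n+3) (2*n+1) 1 : Fin (q+2+1) → ℕ)) g := by
        unfold Jfun
        congr 1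
        funext x
        rw [prod_idx3 hq3 _ _ _ (fun j => pD j g x), prod_idx3 hq3 _ _ _ (fun j => cD j g x)]
        simp only [pD_zero, show q+2+1-3 = q from by omega]
        ring
      have hJA' : (starRingEnd ℂ) (tInt (fun x => pD (2*n+3) g x * cD (2*n+3) g x * cD (2*n+1) g x
              * pD 1 g x * g x ^ (q+1) * cD 0 g x ^ (q+1)))
          = Jfun ((idx3 (2*n+3) (2*n+1) 0 : Fin (q+2+1) → ℕ),
              (idx3 (2*n+3) 1 0 : Fin (q+2+1) → ℕ)) g := by
        rw [← tInt_conj]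
        unfold Jfun
        congr 1
        funext x
        rw [prod_idx3 hq3 _ _ _ (fun j => pD j g x), prod_idx3 hq3 _ _ _ (fun j => cD j g x)]
        simp only [map_mul, map_pow, pD_zero, cD, pD, Complex.conj_conj, iteratedDeriv_zero,
          show q+2+1-3 = q from by omega]
        ring
      have hJB' : (starRingEnd ℂ) (tInt (fun x => pD (2*n+3) g x * cD (2*n+3) g x * cD (2*n+1) g x
              * cD 1 g x * g x ^ (q+2) * cD 0 g x ^ q))
          = Jfun ((idx3 (2*n+3) (2*n+1) 1 : Fin (q+2+1) → ℕ),
              (idx3 (2*n+3) 0 0 : Fin (q+2+1) → ℕ)) g := by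
        rw [← tInt_conj]
        unfold Jfun
        congr 1
        funext x
        rw [prod_idx3 hq3 _ _ _ (fun j => pD j g x), prod_idx3 hq3 _ _ _ (fun j => cD j g x)]
        simp only [map_mul, map_pow, pD_zero, cD, pD, Complex.conj_conj, iteratedDeriv_zero,
          show q+2+1-3 = q from by omega]
        ring
      have hkey := key q n g hg hper
      rw [Complex.ofReal_sub, hW1, hW2, hV]
      set zA := tInt (fun x => pD (2*n+4) g x * cD (2*n+3) g x * cD (2*n+1) g x
              * g x ^ (q+2) * cD 0 g x ^ (q+1)) with hzA
      set zB := tInt (fun x => pD (2*n+3) g x * cD (2*n+4) g x * cD (2*n+1) g x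
              * g x ^ (q+2) * cD 0 g x ^ (q+1)) with hzB
      set zC := tInt (fun x => pD (2*n+3) g x * cD (2*n+3) g x * cD (2*n+2) g x
              * g x ^ (q+2) * cD 0 g x ^ (q+1)) with hzC
      set zV := tInt (fun x => pD (2*n+4) g x * cD (2*n+3) g x * pD (2*n+1) g x
              * g x ^ (q+1) * cD 0 g x ^ (q+2)) with hzV
      set zα := tInt (fun x => pD (2*n+3) g x * cD (2*n+3) g x * cD (2*n+1) g x
              * pD 1 g x * g x ^ (q+1) * cD 0 g x ^ (q+1)) with hzα
      set zβ := tInt (fun x => pD (2*n+3) g x * cD (2*n+3) g x * cD (2*n+1) g x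
              * cD 1 g x * g x ^ (q+2) * cD 0 g x ^ q) with hzβ
      -- turn the left side into the imaginary part of a single complex number
      have hL : ((zC.im : ℂ)) - (((zV.im : ℂ)) - ((zA.im : ℂ)))
          = (((zA + zB + zC).im : ℂ)) := by
        rw [hBconj]
        simp only [Complex.add_im, Complex.conj_im]
        push_cast
        ring
      rw [hL]
      have hsum : zA + zB + zC = -(((q:ℂ)+2) * zα) - ((q:ℂ)+1) * zβ := by
        linear_combination hkey
      rw [hsum, ofReal_im]
      rw [show (starRingEnd ℂ) (-(((q:ℂ)+2) * zα) - ((q:ℂ)+1) * zβ)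
          = -(((q:ℂ)+2) * (starRingEnd ℂ) zα) - ((q:ℂ)+1) * (starRingEnd ℂ) zβ by
        simp only [map_sub, map_neg, map_mul, map_add, Complex.conj_natCast, map_ofNat, map_one]]
      rw [← hJA, ← hJB, hJA', hJB']
      have hI : (2 : ℂ) * Complex.I ≠ 0 := by simp [Complex.I_ne_zero]
      field_simp
      ring
    rw [key4]
    exact Submodule.add_mem _ (Submodule.add_mem _ (Submodule.add_mem _
      (Submodule.smul_mem _ _ (hmem _ memA)) (Submodule.smul_mem _ _ (hmem _ memB)))
      (Submodule.smul_mem _ _ (hmem _ memA'))) (Submodule.smul_mem _ _ (hmem _ memB'))
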